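/- Let t ∈ ℤ and let λ = (λ^•, λ^∘) and μ = (μ^•, μ^∘) be bipartitions such that core(d'_λ) = core(d'_μ) as functions ℤ → {>, <, ∘}. Then for every a ∈ ℤ, n_a(λ^•) − n_{−(a+t)}(λ^∘) = n_a(μ^•) − n_{−(a+t)}(μ^∘). -/

import Mathlib

/-- A partition: a weakly decreasing sequence of natural numbers that is eventually zero.
Here `part i` denotes the part `ν_{i+1}` (0-based indexing of the rows `i ≥ 1`). -/
structure YPartition where
  part : ℕ → ℕ
  antitone : Antitone part
  eventually_zero : ∃ N : ℕ, ∀ i : ℕ, N ≤ i → part i = 0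

/-- `AddBox ν μ a` : the Young diagram of `μ` is obtained from that of `ν` by adding a
single cell of content `a`, i.e. `μ ∈ ν + □_a`.  (The new cell in 0-based row `i` sits in
0-based column `ν.part i`, so its content is `(ν.part i + 1) - (i + 1) = ν.part i - i`.) -/
def AddBox (ν μ : YPartition) (a : ℤ) : Prop :=
  ∃ i : ℕ, μ.part i = ν.part i + 1 ∧ (∀ j : ℕ, j ≠ i → μ.part j = ν.part j) ∧
    (ν.part i : ℤ) - (i : ℤ) = a

/-- `RemoveBox ν μ a` : the Young diagram of `μ` is obtained from that of `ν` by removing a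
single cell of content `a`, i.e. `μ ∈ ν - □_a`. -/
def RemoveBox (ν μ : YPartition) (a : ℤ) : Prop := AddBox μ ν a

open Classical in
/-- `n_a(ν)`: `1` if `ν + □_a ≠ ∅`, `-1` if `ν - □_a ≠ ∅`, and `0` otherwise. -/
noncomputable def nval (ν : YPartition) (a : ℤ) : ℤ :=
  if ∃ μ, AddBox ν μ a then 1 else if ∃ μ, RemoveBox ν μ a then -1 else 0

/-- `C_λ := {λ^•_i + t - i : i ≥ 1}` (this set is also `C'_λ`). -/
def Cset (t : ℤ) (lam : YPartition × YPartition) : Set ℤ :=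
  {s : ℤ | ∃ i : ℕ, (lam.1.part i : ℤ) + t - ((i : ℤ) + 1) = s}

/-- `D'_λ := ℤ \\ {i - λ^∘_i - 1 : i ≥ 1}`. -/
def D'set (lam : YPartition × YPartition) : Set ℤ :=
  {s : ℤ | ¬ ∃ i : ℕ, ((i : ℤ) + 1) - (lam.2.part i : ℤ) - 1 = s}

/-- Labels of core diagrams: `>`, `<`, `∘`. -/
inductive CoreLabel | gt | lt | circ
deriving DecidableEq

open Classical in
/-- The core `core(d'_λ)` of the weight diagram `d'_λ`: all crosses replaced by `∘`. -/
noncomputable def coreDiag (t : ℤ) (lam : YPartition × YPartition) (s : ℤ) : CoreLabel :=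
  if s ∈ Cset t lam ∧ s ∉ D'set lam then .gt
  else if s ∈ D'set lam ∧ s ∉ Cset t lam then .lt
  else .circ


/-!
Encode a partition `ν` by its beta-set `B(ν) = {ν_i - i : i ≥ 1}`, the image of a strictly
decreasing sequence. Adding a cell of content `a` in row `i` moves the bead `ν_i - i = a - 1`
to `a`, so `n_a(ν) = [a - 1 ∈ B(ν)] - [a ∈ B(ν)]`. For a bipartition, `C'_λ = B(λ^•) + t` and
the complement of `D'_λ` is `-B(λ^∘) - 1`; reading `>, <, ∘` as `1, -1, 0`, the core at `s` is
`[s - t ∈ B(λ^•)] + [-s - 1 ∈ B(λ^∘)] - 1`, and `n_a(λ^•) - n_{-(a+t)}(λ^∘)` is the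
difference of these values at `a + t - 1` and `a + t`.
-/

namespace YPartition

variable (ν : YPartition)

def beta (i : ℕ) : ℤ := ν.part i - (i + 1)

def betaSet : Set ℤ := Set.range ν.beta

theorem beta_strictAnti : StrictAnti ν.beta :=
  strictAnti_nat_of_succ_lt fun i => by
    have := ν.antitone (Nat.le_add_right i 1)
    simp only [beta]; push_cast; omega

theorem beta_injective : Function.Injective ν.beta := ν.beta_strictAnti.injective

def updateRow (i v : ℕ) (hprev : ∀ j, j + 1 = i → v ≤ ν.part j) (hnext : ν.part (i + 1) ≤ v) :
    YPartition where
  part := Function.update ν.part i v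
  antitone := antitone_nat_of_succ_le fun n => by
    by_cases hn : n = i
    · subst hn; simpa using hnext
    by_cases hn' : n + 1 = i
    · subst hn'; simpa using hprev n rfl
    · simpa [Function.update_of_ne hn, Function.update_of_ne hn'] using
        ν.antitone (Nat.le_add_right n 1)
  eventually_zero := by
    obtain ⟨N, hN⟩ := ν.eventually_zero
    exact ⟨max N (i + 1), fun j hj => by
      rw [Function.update_of_ne (by omega)]; exact hN j (by omega)⟩

theorem updateRow_addBox (i v : ℕ) (hprev : ∀ j, j + 1 = i → v ≤ ν.part j)
    (hnext : ν.part (i + 1) ≤ v) (hv : v = ν.part i + 1) :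
    AddBox ν (ν.updateRow i v hprev hnext) (ν.part i - i) :=
  ⟨i, by simp [updateRow, hv], fun j hj => Function.update_of_ne hj _ _, rfl⟩

theorem updateRow_removeBox (i v : ℕ) (hprev : ∀ j, j + 1 = i → v ≤ ν.part j)
    (hnext : ν.part (i + 1) ≤ v) (hv : ν.part i = v + 1) :
    RemoveBox ν (ν.updateRow i v hprev hnext) (v - i) :=
  ⟨i, by simp [updateRow, hv], fun j hj => (Function.update_of_ne hj _ _).symm,
    by simp [updateRow]⟩

end YPartition

open YPartition

section Beads

variable {ν μ : YPartition} {a : ℤ}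

theorem AddBox.beads_before (h : AddBox ν μ a) : a - 1 ∈ ν.betaSet ∧ a ∉ ν.betaSet := by
  obtain ⟨i, hi, hrest, ha⟩ := h
  refine ⟨⟨i, by simp only [beta]; omega⟩, ?_⟩
  rintro ⟨j, hj⟩
  have hji : j ≠ i := by rintro rfl; simp only [beta] at hj; omega
  refine hji (μ.beta_injective ?_)
  simp only [beta, hrest j hji] at hj ⊢
  omega

theorem AddBox.beads_after (h : AddBox ν μ a) : a ∈ μ.betaSet ∧ a - 1 ∉ μ.betaSet := by
  obtain ⟨i, hi, hrest, ha⟩ := h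
  refine ⟨⟨i, by simp only [beta]; omega⟩, ?_⟩
  rintro ⟨j, hj⟩
  have hji : j ≠ i := by rintro rfl; simp only [beta] at hj; omega
  refine hji (ν.beta_injective ?_)
  simp only [beta, ← hrest j hji] at hj ⊢
  omega

theorem exists_addBox_iff : (∃ μ, AddBox ν μ a) ↔ a - 1 ∈ ν.betaSet ∧ a ∉ ν.betaSet := by
  refine ⟨fun ⟨_, h⟩ => h.beads_before, ?_⟩
  rintro ⟨⟨i, hi⟩, hnot⟩
  have hprev : ∀ j, j + 1 = i → ν.part i + 1 ≤ ν.part j := by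
    rintro j rfl
    have := ν.antitone (Nat.le_add_right j 1)
    by_contra hlt
    exact hnot ⟨j, by simp only [beta] at hi ⊢; push_cast at hi; omega⟩
  have hnext := ν.antitone (Nat.le_add_right i 1)
  refine ⟨ν.updateRow i (ν.part i + 1) hprev (by omega), ?_⟩
  convert ν.updateRow_addBox i _ hprev (by omega) rfl
  simp only [beta] at hi; omega

theorem exists_removeBox_iff : (∃ μ, RemoveBox ν μ a) ↔ a ∈ ν.betaSet ∧ a - 1 ∉ ν.betaSet := by
  refine ⟨fun ⟨_, h⟩ => h.beads_after, ?_⟩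
  rintro ⟨⟨i, hi⟩, hnot⟩
  have hnext : ν.part (i + 1) < ν.part i := by
    have := ν.antitone (Nat.le_add_right i 1)
    by_contra hle
    exact hnot ⟨i + 1, by simp only [beta] at hi ⊢; push_cast; omega⟩
  have hprev : ∀ j, j + 1 = i → ν.part i - 1 ≤ ν.part j := by
    rintro j rfl
    have := ν.antitone (Nat.le_add_right j 1)
    omega
  refine ⟨ν.updateRow i (ν.part i - 1) hprev (by omega), ?_⟩
  convert ν.updateRow_removeBox i _ hprev (by omega) (by omega)
  simp only [beta] at hi; omega

theorem nval_eq_indicator (ν : YPartition) (a : ℤ) :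
    nval ν a = ν.betaSet.indicator 1 (a - 1) - ν.betaSet.indicator 1 a := by
  unfold nval
  rw [exists_addBox_iff, exists_removeBox_iff]
  by_cases h₁ : a - 1 ∈ ν.betaSet <;> by_cases h₂ : a ∈ ν.betaSet <;> simp [h₁, h₂]

end Beads

section Core

variable (t : ℤ) (lam : YPartition × YPartition)

theorem mem_Cset_iff (s : ℤ) : s ∈ Cset t lam ↔ s - t ∈ lam.1.betaSet :=
  exists_congr fun i => by simp only [beta]; omega

theorem mem_D'set_iff (s : ℤ) : s ∈ D'set lam ↔ -s - 1 ∉ lam.2.betaSet :=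
  not_congr <| exists_congr fun i => by simp only [beta]; omega

def CoreLabel.sign : CoreLabel → ℤ
  | .gt => 1
  | .lt => -1
  | .circ => 0

theorem sign_coreDiag (s : ℤ) :
    (coreDiag t lam s).sign =
      lam.1.betaSet.indicator 1 (s - t) + lam.2.betaSet.indicator 1 (-s - 1) - 1 := by
  unfold coreDiag
  rw [mem_Cset_iff, mem_D'set_iff]
  by_cases h₁ : s - t ∈ lam.1.betaSet <;> by_cases h₂ : -s - 1 ∈ lam.2.betaSet <;>
    simp [h₁, h₂, CoreLabel.sign]

theorem nval_sub_nval_eq_sign_coreDiag (a : ℤ) :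
    nval lam.1 a - nval lam.2 (-(a + t)) =
      (coreDiag t lam (a + t - 1)).sign - (coreDiag t lam (a + t)).sign := by
  rw [nval_eq_indicator, nval_eq_indicator, sign_coreDiag, sign_coreDiag,
    show a + t - 1 - t = a - 1 by ring, show -(a + t - 1) - 1 = -(a + t) by ring,
    add_sub_cancel_right]
  ring

end Core

/-- If two bipartitions have weight diagrams `d'_λ`, `d'_μ` with equal cores, then for every
`a ∈ ℤ`, `n_a(λ^•) - n_{-(a+t)}(λ^∘) = n_a(μ^•) - n_{-(a+t)}(μ^∘)`. -/
theorem equal_cores_weights (t : ℤ) (lam mu : YPartition × YPartition)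
    (h : ∀ s : ℤ, coreDiag t lam s = coreDiag t mu s) (a : ℤ) :
    nval lam.1 a - nval lam.2 (-(a + t)) = nval mu.1 a - nval mu.2 (-(a + t)) := by
  rw [nval_sub_nval_eq_sign_coreDiag, nval_sub_nval_eq_sign_coreDiag, h, h]
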